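/- For a Gaussian mixture X with density f = ∑_{i=1}^C π_i φ(·; μ_i, σ_i²) on ℝ (π_i ≥ 0, ∑π_i = 1, σ_i > 0), the differential entropy satisfies the lower bound H(X) ≥ -∑_{i=1}^C π_i log(∑_{j=1}^C π_j z_{ij}), where z_{ij} = φ(μ_i; μ_j, σ_i² + σ_j²) and φ(x; μ, σ²) is the Gaussian density. -/

import Mathlib

open Real MeasureTheory

/-- Density of the one-dimensional Gaussian with mean `m` and variance `v`. -/
noncomputable def gaussPdf (m v : ℝ) (x : ℝ) : ℝ :=
  (Real.sqrt (2 * Real.pi * v))⁻¹ * Real.exp (-(x - m) ^ 2 / (2 * v))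

lemma gaussPdf_pos (m : ℝ) {v : ℝ} (hv : 0 < v) (x : ℝ) : 0 < gaussPdf m v x := by
  have : 0 < 2 * Real.pi * v := by positivity
  unfold gaussPdf
  positivity

lemma gaussPdf_continuous (m v : ℝ) : Continuous (gaussPdf m v) := by
  unfold gaussPdf; fun_prop

lemma gaussPdf_eq (m : ℝ) {v : ℝ} (hv : 0 < v) :
    gaussPdf m v = ProbabilityTheory.gaussianPDFReal m ⟨v, hv.le⟩ := by
  ext x
  simp [gaussPdf, ProbabilityTheory.gaussianPDFReal, one_div]
  rfl

lemma integrable_gaussPdf (m : ℝ) {v : ℝ} (hv : 0 < v) : Integrable (gaussPdf m v) := by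
  rw [gaussPdf_eq m hv]; exact ProbabilityTheory.integrable_gaussianPDFReal m _

lemma integral_gaussPdf (m : ℝ) {v : ℝ} (hv : 0 < v) : ∫ x, gaussPdf m v x = 1 := by
  rw [gaussPdf_eq m hv]
  exact ProbabilityTheory.integral_gaussianPDFReal_eq_one m
    (by intro h; exact hv.ne' (congrArg Subtype.val h))

lemma gaussPdf_mul (a b : ℝ) {s t : ℝ} (hs : 0 < s) (ht : 0 < t) (x : ℝ) :
    gaussPdf a s x * gaussPdf b t x =
      gaussPdf b (s + t) a * gaussPdf ((a * t + b * s) / (s + t)) (s * t / (s + t)) x := by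
  have hst : 0 < s + t := by linarith
  have h1 : Real.sqrt (2 * Real.pi * s) * Real.sqrt (2 * Real.pi * t)
      = Real.sqrt (2 * Real.pi * (s + t)) * Real.sqrt (2 * Real.pi * (s * t / (s + t))) := by
    rw [← Real.sqrt_mul (by positivity), ← Real.sqrt_mul (by positivity)]
    congr 1
    field_simp
  have h2 : -(x - a) ^ 2 / (2 * s) + -(x - b) ^ 2 / (2 * t)
      = -(a - b) ^ 2 / (2 * (s + t)) + -(x - (a * t + b * s) / (s + t)) ^ 2 / (2 * (s * t / (s + t))) := by
    field_simp
    ring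
  unfold gaussPdf
  rw [show ∀ p q r u : ℝ, p * Real.exp q * (r * Real.exp u) = (p * r) * Real.exp (q + u) by
    intro p q r u; rw [Real.exp_add]; ring, ← mul_inv, h1, h2, mul_inv, Real.exp_add]
  ring

lemma integrable_gaussPdf_mul (a b : ℝ) {s t : ℝ} (hs : 0 < s) (ht : 0 < t) :
    Integrable (fun x => gaussPdf a s x * gaussPdf b t x) := by
  have hv : 0 < s * t / (s + t) := by positivity
  simp only [fun x => gaussPdf_mul a b hs ht x]
  exact (integrable_gaussPdf _ hv).const_mul _

lemma integral_gaussPdf_mul (a b : ℝ) {s t : ℝ} (hs : 0 < s) (ht : 0 < t) :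
    ∫ x, gaussPdf a s x * gaussPdf b t x = gaussPdf b (s + t) a := by
  have hv : 0 < s * t / (s + t) := by positivity
  simp only [fun x => gaussPdf_mul a b hs ht x]
  rw [integral_const_mul, integral_gaussPdf _ hv, mul_one]

/-- Huber et al. (2008) lower bound for the differential entropy of a
one-dimensional Gaussian mixture `∑ πᵢ φ(·; μᵢ, σᵢ²)`:
`H(X) ≥ -∑ᵢ πᵢ log(∑ⱼ πⱼ z_{ij})` with `z_{ij} = φ(μᵢ; μⱼ, σᵢ² + σⱼ²)`. -/
theorem gm_entropy_lower_bound (C : ℕ) (w μ σ : Fin C → ℝ)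
    (hw : ∀ i, 0 ≤ w i) (hw1 : ∑ i, w i = 1) (hσ : ∀ i, 0 < σ i)
    (hent_int : Integrable (fun x =>
      (∑ i, w i * gaussPdf (μ i) (σ i ^ 2) x) *
        Real.log (∑ i, w i * gaussPdf (μ i) (σ i ^ 2) x))) :
    (-∫ x : ℝ, (∑ i, w i * gaussPdf (μ i) (σ i ^ 2) x) *
        Real.log (∑ i, w i * gaussPdf (μ i) (σ i ^ 2) x))
      ≥ -∑ i, w i *
          Real.log (∑ j, w j * gaussPdf (μ j) (σ i ^ 2 + σ j ^ 2) (μ i)) := by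
  set f : ℝ → ℝ := fun x => ∑ i, w i * gaussPdf (μ i) (σ i ^ 2) x with hf
  set c : Fin C → ℝ := fun i => ∑ j, w j * gaussPdf (μ j) (σ i ^ 2 + σ j ^ 2) (μ i) with hc
  have hσ2 : ∀ i, 0 < σ i ^ 2 := fun i => pow_pos (hσ i) 2
  -- some weight is positive
  obtain ⟨i0, hi0⟩ : ∃ i, 0 < w i := by
    by_contra h
    push_neg at h
    have : ∑ i, w i = 0 := Finset.sum_eq_zero fun i _ => le_antisymm (h i) (hw i)
    simp [this] at hw1
  -- f is positive
  have hfpos : ∀ x, 0 < f x := fun x =>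
    lt_of_lt_of_le (mul_pos hi0 (gaussPdf_pos _ (hσ2 i0) x))
      (Finset.single_le_sum (fun j _ => mul_nonneg (hw j) (gaussPdf_pos _ (hσ2 j) x).le)
        (Finset.mem_univ i0))
  have hfcont : Continuous f := continuous_finset_sum _ fun i _ =>
    continuous_const.mul (gaussPdf_continuous _ _)
  have hlogcont : Continuous fun x => Real.log (f x) :=
    hfcont.log fun x => (hfpos x).ne'
  -- c is positive
  have hcpos : ∀ i, 0 < c i := fun i =>
    lt_of_lt_of_le (mul_pos hi0 (gaussPdf_pos _ (add_pos (hσ2 i) (hσ2 i0)) (μ i)))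
      (Finset.single_le_sum
        (fun j _ => mul_nonneg (hw j) (gaussPdf_pos _ (add_pos (hσ2 i) (hσ2 j)) (μ i)).le)
        (Finset.mem_univ i0))
  -- φ_i * f is integrable with integral c i
  have hφf_int : ∀ i, Integrable (fun x => gaussPdf (μ i) (σ i ^ 2) x * f x) := by
    intro i
    have : (fun x => gaussPdf (μ i) (σ i ^ 2) x * f x)
        = fun x => ∑ j, w j * (gaussPdf (μ i) (σ i ^ 2) x * gaussPdf (μ j) (σ j ^ 2) x) := by
      funext x
      rw [hf, Finset.mul_sum]
      exact Finset.sum_congr rfl fun j _ => by ring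
    rw [this]
    exact integrable_finset_sum _ fun j _ =>
      (integrable_gaussPdf_mul _ _ (hσ2 i) (hσ2 j)).const_mul _
  have hφf : ∀ i, ∫ x, gaussPdf (μ i) (σ i ^ 2) x * f x = c i := by
    intro i
    have h1 : (fun x => gaussPdf (μ i) (σ i ^ 2) x * f x)
        = fun x => ∑ j, w j * (gaussPdf (μ i) (σ i ^ 2) x * gaussPdf (μ j) (σ j ^ 2) x) := by
      funext x
      rw [hf, Finset.mul_sum]
      exact Finset.sum_congr rfl fun j _ => by ring
    rw [h1, integral_finset_sum _ fun j _ =>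
      (integrable_gaussPdf_mul _ _ (hσ2 i) (hσ2 j)).const_mul _]
    refine Finset.sum_congr rfl fun j _ => ?_
    rw [integral_const_mul, integral_gaussPdf_mul _ _ (hσ2 i) (hσ2 j)]
  -- φ_i * log f is integrable when w i > 0
  have hint : ∀ i, 0 < w i → Integrable (fun x => gaussPdf (μ i) (σ i ^ 2) x * Real.log (f x)) := by
    intro i hwi
    refine Integrable.mono (hent_int.const_mul (w i)⁻¹)
      (((gaussPdf_continuous _ _).mul hlogcont).aestronglyMeasurable) (ae_of_all _ fun x => ?_)
    have hb : w i * gaussPdf (μ i) (σ i ^ 2) x ≤ f x :=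
      Finset.single_le_sum (fun j _ => mul_nonneg (hw j) (gaussPdf_pos _ (hσ2 j) x).le)
        (Finset.mem_univ i)
    have h1 : gaussPdf (μ i) (σ i ^ 2) x ≤ (w i)⁻¹ * f x := by
      rw [le_inv_mul_iff₀ hwi]
      exact hb
    calc ‖gaussPdf (μ i) (σ i ^ 2) x * Real.log (f x)‖
        = gaussPdf (μ i) (σ i ^ 2) x * ‖Real.log (f x)‖ := by
          rw [norm_mul, Real.norm_of_nonneg (gaussPdf_pos _ (hσ2 i) x).le]
      _ ≤ (w i)⁻¹ * f x * ‖Real.log (f x)‖ :=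
          mul_le_mul_of_nonneg_right h1 (norm_nonneg _)
      _ = ‖(w i)⁻¹ * (f x * Real.log (f x))‖ := by
          rw [norm_mul, norm_mul, Real.norm_of_nonneg (by positivity : (0:ℝ) ≤ (w i)⁻¹),
            Real.norm_of_nonneg (hfpos x).le]
          ring
  -- key inequality: ∫ φ_i log f ≤ log (c i) for w i > 0
  have hkey : ∀ i, 0 < w i → ∫ x, gaussPdf (μ i) (σ i ^ 2) x * Real.log (f x) ≤ Real.log (c i) := by
    intro i hwi
    have hci := hcpos i
    have hg_int : Integrable (fun x =>
        gaussPdf (μ i) (σ i ^ 2) x * (Real.log (c i) - 1)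
          + (c i)⁻¹ * (gaussPdf (μ i) (σ i ^ 2) x * f x)) :=
      ((integrable_gaussPdf _ (hσ2 i)).mul_const _).add ((hφf_int i).const_mul _)
    have hle : ∀ x, gaussPdf (μ i) (σ i ^ 2) x * Real.log (f x)
        ≤ gaussPdf (μ i) (σ i ^ 2) x * (Real.log (c i) - 1)
          + (c i)⁻¹ * (gaussPdf (μ i) (σ i ^ 2) x * f x) := by
      intro x
      have hlog : Real.log (f x) - Real.log (c i) ≤ f x / c i - 1 := by
        have := Real.log_le_sub_one_of_pos (div_pos (hfpos x) hci)
        rwa [Real.log_div (hfpos x).ne' hci.ne'] at this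
      have h2 : Real.log (f x) ≤ (Real.log (c i) - 1) + (c i)⁻¹ * f x := by
        rw [div_eq_inv_mul] at hlog
        linarith
      calc gaussPdf (μ i) (σ i ^ 2) x * Real.log (f x)
          ≤ gaussPdf (μ i) (σ i ^ 2) x * ((Real.log (c i) - 1) + (c i)⁻¹ * f x) :=
            mul_le_mul_of_nonneg_left h2 (gaussPdf_pos _ (hσ2 i) x).le
        _ = _ := by ring
    calc ∫ x, gaussPdf (μ i) (σ i ^ 2) x * Real.log (f x)
        ≤ ∫ x, gaussPdf (μ i) (σ i ^ 2) x * (Real.log (c i) - 1)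
            + (c i)⁻¹ * (gaussPdf (μ i) (σ i ^ 2) x * f x) :=
          integral_mono (hint i hwi) hg_int hle
      _ = (∫ x, gaussPdf (μ i) (σ i ^ 2) x) * (Real.log (c i) - 1)
            + (c i)⁻¹ * ∫ x, gaussPdf (μ i) (σ i ^ 2) x * f x := by
          rw [integral_add ((integrable_gaussPdf _ (hσ2 i)).mul_const _) ((hφf_int i).const_mul _),
            integral_mul_const, integral_const_mul]
      _ = Real.log (c i) := by
          rw [integral_gaussPdf _ (hσ2 i), hφf i, one_mul, inv_mul_cancel₀ hci.ne']
          ring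
  -- decompose the entropy integral
  have hsummand_int : ∀ i, Integrable (fun x =>
      w i * (gaussPdf (μ i) (σ i ^ 2) x * Real.log (f x))) := by
    intro i
    rcases eq_or_lt_of_le (hw i) with h | h
    · simp only [← h, zero_mul]
      exact integrable_zero _ _ _
    · exact (hint i h).const_mul _
  have hdecomp : ∫ x, f x * Real.log (f x)
      = ∑ i, w i * ∫ x, gaussPdf (μ i) (σ i ^ 2) x * Real.log (f x) := by
    have h1 : (fun x => f x * Real.log (f x))
        = fun x => ∑ i, w i * (gaussPdf (μ i) (σ i ^ 2) x * Real.log (f x)) := by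
      funext x
      rw [hf, Finset.sum_mul]
      exact Finset.sum_congr rfl fun i _ => by ring
    rw [h1, integral_finset_sum _ fun i _ => hsummand_int i]
    exact Finset.sum_congr rfl fun i _ => integral_const_mul _ _
  rw [ge_iff_le, neg_le_neg_iff]
  rw [show (∫ x : ℝ, (∑ i, w i * gaussPdf (μ i) (σ i ^ 2) x) *
        Real.log (∑ i, w i * gaussPdf (μ i) (σ i ^ 2) x)) = ∫ x, f x * Real.log (f x) from rfl,
    hdecomp]
  refine Finset.sum_le_sum fun i _ => ?_
  rcases eq_or_lt_of_le (hw i) with h | h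
  · simp [← h]
  · exact mul_le_mul_of_nonneg_left (hkey i h) (hw i)
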